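/- Suppose W ≥ 6d, L ≥ 1, and N ≤ W·⌊W/(6d)⌋·L. Then for any real numbers x_0 < x_1 < ⋯ < x_N < x_{N+1}, every function in S^d(x_0,…,x_{N+1}) belongs to NN_{1,d}(W+d+1, 2L). -/

import Mathlib

open Finset
open scoped BigOperators

/-- ReLU activation. -/
noncomputable def relu (x : ℝ) : ℝ := max x 0

/-- Parameters of a fully connected feed-forward ReLU neural network with input
dimension `d` and output dimension `k`. -/
structure MLP (d k : ℕ) where
  depth : ℕ
  width : ℕ → ℕ
  width_in : width 0 = d
  width_out : width (depth + 1) = k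
  A : (ℓ : ℕ) → Matrix (Fin (width (ℓ + 1))) (Fin (width ℓ)) ℝ
  b : (ℓ : ℕ) → Fin (width (ℓ + 1)) → ℝ

namespace MLP

variable {d k : ℕ}

/-- Hidden layer outputs: `φ₀(x) = x`, `φ_{ℓ+1}(x) = σ(A_ℓ φ_ℓ(x) + b_ℓ)`. -/
noncomputable def layer (φ : MLP d k) (x : Fin d → ℝ) : (ℓ : ℕ) → Fin (φ.width ℓ) → ℝ
  | 0 => fun i => x (Fin.cast φ.width_in i)
  | ℓ + 1 => fun i => relu ((φ.A ℓ).mulVec (layer φ x ℓ) i + φ.b ℓ i)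

/-- The function computed by the network: `φ(x) = A_L φ_L(x) + b_L`. -/
noncomputable def eval (φ : MLP d k) (x : Fin d → ℝ) : Fin k → ℝ := fun j =>
  (φ.A φ.depth).mulVec (φ.layer x φ.depth) (Fin.cast φ.width_out.symm j) +
    φ.b φ.depth (Fin.cast φ.width_out.symm j)

/-- Maximum ℓ¹-norm of the rows of the augmented matrix `(A, b)`. -/
noncomputable def augNorm {m n : ℕ} (A : Matrix (Fin m) (Fin n) ℝ) (b : Fin m → ℝ) : ℝ :=
  ⨆ i : Fin m, ((∑ j, |A i j|) + |b i|)

/-- The norm constraint `κ(θ) = ‖(A_L,b_L)‖ ∏_{ℓ<L} max{‖(A_ℓ,b_ℓ)‖, 1}`. -/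
noncomputable def kappa (φ : MLP d k) : ℝ :=
  augNorm (φ.A φ.depth) (φ.b φ.depth) *
    ∏ ℓ ∈ Finset.range φ.depth, max (augNorm (φ.A ℓ) (φ.b ℓ)) 1

end MLP

/-- The class `NN_{d,k}(W, L)` of ReLU networks with width at most `W` and depth `L`. -/
def NNSet (d k W L : ℕ) : Set ((Fin d → ℝ) → Fin k → ℝ) :=
  {f | ∃ φ : MLP d k, φ.depth = L ∧ (∀ ℓ, 1 ≤ ℓ → ℓ ≤ L → φ.width ℓ ≤ W) ∧ f = φ.eval}

/-- The norm-constrained class `NN_{d,k}(W, L, K)`. -/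
def NNSetNorm (d k W L : ℕ) (K : ℝ) : Set ((Fin d → ℝ) → Fin k → ℝ) :=
  {f | ∃ φ : MLP d k, φ.depth = L ∧ (∀ ℓ, 1 ≤ ℓ → ℓ ≤ L → φ.width ℓ ≤ W) ∧
      φ.kappa ≤ K ∧ f = φ.eval}

/-- Scalar-valued networks `NN_{d,1}(W, L)`, viewed as maps `ℝ^d → ℝ`. -/
def NNScalar (d W L : ℕ) : Set ((Fin d → ℝ) → ℝ) :=
  {f | ∃ g ∈ NNSet d 1 W L, f = fun x => g x 0}

/-- Scalar-valued norm-constrained networks `NN_{d,1}(W, L, K)`, viewed as maps `ℝ^d → ℝ`. -/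
def NNScalarNorm (d W L : ℕ) (K : ℝ) : Set ((Fin d → ℝ) → ℝ) :=
  {f | ∃ g ∈ NNSetNorm d 1 W L K, f = fun x => g x 0}

/-- Networks `NN_{1,k}(W, L)` with one-dimensional input, viewed as maps `ℝ → ℝ^k`. -/
def NNFromReal (k W L : ℕ) : Set (ℝ → Fin k → ℝ) :=
  {f | ∃ g ∈ NNSet 1 k W L, f = fun t => g (fun _ => t)}

/-- Norm-constrained networks `NN_{1,1}(W, L, K)`, viewed as maps `ℝ → ℝ`. -/
def NNRealScalarNorm (W L : ℕ) (K : ℝ) : Set (ℝ → ℝ) :=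
  {f | ∃ g ∈ NNSetNorm 1 1 W L K, f = fun t => g (fun _ => t) 0}

/-- The class `S^d(x₀, …, x_{N+1})` of continuous piecewise linear functions `ℝ → ℝ^d`
with breakpoints among `x₀ < x₁ < ⋯ < x_{N+1}`, constant on `(-∞, x₀]` and `[x_{N+1}, ∞)`. -/
def CPwLClass (d N : ℕ) (x : ℕ → ℝ) : Set (ℝ → Fin d → ℝ) :=
  {f | Continuous f ∧
    (∀ t ≤ x 0, f t = f (x 0)) ∧
    (∀ t, x (N + 1) ≤ t → f t = f (x (N + 1))) ∧
    (∀ i ≤ N, ∃ a b : Fin d → ℝ, ∀ t ∈ Set.Icc (x i) (x (i + 1)),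
      f t = fun j => a j * t + b j)}

/-!
Write `f t = f x₀ + ∑_q relu (t - x_q) • κ_q`, with `κ_q` the jump of the slope at `x_q`; it
remains to realize sums of ramps. Cut the breakpoints into `L` blocks of
`(W - 3)(k + 1) + 3 ≥ W k + 2` consecutive ones, `k = ⌊W / (6d)⌋`, and spend two hidden layers
on each block. The first computes `W` ramps at breakpoints of the block chosen so that `k` others
lie between any two consecutive inner ones. In the second, a neuron applies `relu` to a sum of
`N`-shaped combinations of four consecutive ramps; `relu` turns the zero crossing of each `N`
into a new breakpoint, placed at one of the other breakpoints, and `N`s three groups apart have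
disjoint supports, so that `6dk ≤ W` neurons serve every interior position, coordinate, residue
mod `3` and sign. Besides, `d` channels carry the partial sums, lifted by a multiple of
`relu (t - x₀)` to stay nonnegative, and one channel carries `relu (t - x₀)`, from which the
ramps of each block are recomputed.
-/

section Relu

theorem relu_nonneg (x : ℝ) : 0 ≤ relu x := le_max_right _ _

theorem relu_of_nonneg {x : ℝ} (h : 0 ≤ x) : relu x = x := max_eq_left h

theorem relu_of_nonpos {x : ℝ} (h : x ≤ 0) : relu x = 0 := max_eq_right h

theorem relu_mul_of_nonneg {c : ℝ} (hc : 0 ≤ c) (x : ℝ) : relu (c * x) = c * relu x := by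
  simp only [relu, mul_max_of_nonneg _ _ hc, mul_zero]

theorem abs_relu_le (x : ℝ) : |relu x| ≤ |x| := by
  rw [abs_of_nonneg (relu_nonneg x)]
  exact max_le (le_abs_self x) (abs_nonneg x)

theorem relu_sub_le_relu_sub {a b : ℝ} (h : a ≤ b) (t : ℝ) : relu (t - b) ≤ relu (t - a) :=
  max_le_max (by linarith) le_rfl

theorem relu_relu_sub_add_sub {a b : ℝ} (h : a ≤ b) (t : ℝ) :
    relu (relu (t - a) + (a - b)) = relu (t - b) := by
  rcases le_total t a with ht | ht
  · rw [relu_of_nonpos (by linarith : t - a ≤ 0), relu_of_nonpos (by linarith),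
      relu_of_nonpos (by linarith)]
  · rw [relu_of_nonneg (by linarith : 0 ≤ t - a), sub_add_sub_cancel]

theorem relu_sum_of_pairwise {ι : Type*} {s : Finset ι} {g : ι → ℝ}
    (h : ∀ p ∈ s, ∀ q ∈ s, p ≠ q → g p = 0 ∨ g q = 0) :
    relu (∑ p ∈ s, g p) = ∑ p ∈ s, relu (g p) := by
  by_cases hne : ∃ p ∈ s, g p ≠ 0
  · obtain ⟨p, hp, hgp⟩ := hne
    have hzero : ∀ q ∈ s, q ≠ p → g q = 0 := fun q hq hqp => (h p hp q hq hqp.symm).resolve_left hgp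
    rw [sum_eq_single_of_mem p hp hzero,
      sum_eq_single_of_mem p hp fun q hq hqp => by rw [hzero q hq hqp, relu_of_nonpos le_rfl]]
  · push Not at hne
    rw [sum_eq_zero hne, sum_eq_zero fun p hp => by rw [hne p hp, relu_of_nonpos le_rfl],
      relu_of_nonpos le_rfl]

end Relu

section Ramps

noncomputable def ramps (W : ℕ) (β : ℕ → ℝ) (t : ℝ) : (ℕ → ℝ) →ₗ[ℝ] ℝ :=
  ∑ p ∈ range W, relu (t - β p) • LinearMap.proj p

variable {W : ℕ} {β : ℕ → ℝ}

theorem ramps_apply (t : ℝ) (c : ℕ → ℝ) :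
    ramps W β t c = ∑ p ∈ range W, c p * relu (t - β p) := by
  simp [ramps, mul_comm]

theorem ramps_single {p : ℕ} (hp : p < W) (t : ℝ) :
    ramps W β t (Pi.single p 1) = relu (t - β p) := by
  simp [ramps_apply, Pi.single_apply, hp]

theorem abs_ramps_le {a : ℝ} (hβ : ∀ p < W, a ≤ β p) (t : ℝ) (c : ℕ → ℝ) :
    |ramps W β t c| ≤ (∑ p ∈ range W, |c p|) * relu (t - a) := by
  rw [ramps_apply, sum_mul]
  refine (abs_sum_le_sum_abs _ _).trans (sum_le_sum fun p hp => ?_)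
  rw [abs_mul, abs_of_nonneg (relu_nonneg _)]
  exact mul_le_mul_of_nonneg_left (relu_sub_le_relu_sub (hβ p (mem_range.mp hp)) t) (abs_nonneg _)

end Ramps


namespace MLP

noncomputable def ofCoeffs {d k : ℕ} (L : ℕ) (w : ℕ → ℕ) (h0 : w 0 = d) (hL : w (L + 1) = k)
    (A : ℕ → ℕ → ℕ → ℝ) (b : ℕ → ℕ → ℝ) : MLP d k where
  depth := L
  width := w
  width_in := h0
  width_out := hL
  A ℓ := Matrix.of fun i j => A ℓ i j
  b ℓ i := b ℓ i

variable {d k L : ℕ} {w : ℕ → ℕ} {h0 : w 0 = d} {hL : w (L + 1) = k}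
  {A : ℕ → ℕ → ℕ → ℝ} {b : ℕ → ℕ → ℝ}

theorem layer_ofCoeffs {x : Fin d → ℝ} {V : ℕ → ℕ → ℝ}
    (hV₀ : ∀ i : Fin (w 0), x (Fin.cast h0 i) = V 0 i)
    (hV : ∀ ℓ < L, ∀ i < w (ℓ + 1),
      relu (∑ j ∈ range (w ℓ), A ℓ i j * V ℓ j + b ℓ i) = V (ℓ + 1) i) :
    ∀ ℓ ≤ L, ∀ i : Fin (w ℓ), (ofCoeffs L w h0 hL A b).layer x ℓ i = V ℓ i := by
  intro ℓ
  induction ℓ with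
  | zero => exact fun _ => hV₀
  | succ ℓ ih =>
    intro hℓ i
    rw [← hV ℓ hℓ i i.isLt, ← Fin.sum_univ_eq_sum_range (fun j => A ℓ i j * V ℓ j)]
    change relu (∑ j : Fin (w ℓ), A ℓ i j * (ofCoeffs L w h0 hL A b).layer x ℓ j + b ℓ i) = _
    simp only [ih (Nat.le_of_succ_le hℓ)]

theorem eval_ofCoeffs {x : Fin d → ℝ} {V : ℕ → ℕ → ℝ}
    (hV : ∀ i : Fin (w L), (ofCoeffs L w h0 hL A b).layer x L i = V L i) (j : Fin k) :
    (ofCoeffs L w h0 hL A b).eval x j = ∑ n ∈ range (w L), A L j n * V L n + b L j := by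
  rw [← Fin.sum_univ_eq_sum_range (fun n => A L j n * V L n)]
  change ∑ n : Fin (w L), A L j n * (ofCoeffs L w h0 hL A b).layer x L n + b L j = _
  simp only [hV]

end MLP

section Channels

def channels (d : ℕ) {α : Type*} (a : α) (z u : ℕ → α) (n : ℕ) : α :=
  if n = 0 then a else if n ≤ d then z (n - 1) else u (n - (d + 1))

variable {d W : ℕ} {α : Type*} {a : α} {z u : ℕ → α}

@[simp] theorem channels_zero : channels d a z u 0 = a := rfl

@[simp] theorem channels_succ {ν : ℕ} (hν : ν < d) : channels d a z u (ν + 1) = z ν := by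
  simp [channels, Nat.succ_le_of_lt hν]

@[simp] theorem channels_add_add_one (w : ℕ) : channels d a z u (w + d + 1) = u w := by
  simp [channels, show w + d + 1 - (d + 1) = w by omega]

theorem sum_range_channels {M : Type*} [AddCommMonoid M] (F : ℕ → M) :
    ∑ n ∈ range (W + d + 1), F n =
      F 0 + ∑ ν ∈ range d, F (ν + 1) + ∑ w ∈ range W, F (w + d + 1) := by
  rw [show W + d + 1 = 1 + d + W by omega, sum_range_add, sum_range_add, sum_range_one]
  congr 1
  · exact congrArg _ (sum_congr rfl fun ν _ => congrArg F (Nat.add_comm 1 ν))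
  · exact sum_congr rfl fun w _ => congrArg F (by omega)

theorem sum_channels_mul_channels {α₀ a₀ : ℝ} {ζ μ z₀ u₀ : ℕ → ℝ} :
    ∑ n ∈ range (W + d + 1), channels d α₀ ζ μ n * channels d a₀ z₀ u₀ n =
      α₀ * a₀ + ∑ ν ∈ range d, ζ ν * z₀ ν + ∑ w ∈ range W, μ w * u₀ w := by
  rw [sum_range_channels (W := W) (d := d) (M := ℝ)]
  simp only [channels_zero, channels_add_add_one]
  congr 2
  exact sum_congr rfl fun ν hν => by simp [mem_range.mp hν]

theorem sum_single_mul {ν : ℕ} (hν : ν < d) (z₀ : ℕ → ℝ) :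
    ∑ ν' ∈ range d, (Pi.single ν 1 : ℕ → ℝ) ν' * z₀ ν' = z₀ ν := by
  simp [Pi.single_apply, hν]

theorem relu_channels_step {m : ℕ} {V : ℕ → ℝ} {R₀ : ℕ → ℝ} {RZ RU : ℕ → ℕ → ℝ} {b₀ : ℝ}
    {bZ bU : ℕ → ℝ} {a' : ℝ} {z' u' : ℕ → ℝ}
    (h₀ : relu (∑ n ∈ range m, R₀ n * V n + b₀) = a')
    (hZ : ∀ ν < d, relu (∑ n ∈ range m, RZ ν n * V n + bZ ν) = z' ν)
    (hU : ∀ w < W, relu (∑ n ∈ range m, RU w n * V n + bU w) = u' w) :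
    ∀ i < W + d + 1,
      relu (∑ n ∈ range m, channels d R₀ RZ RU i n * V n + channels d b₀ bZ bU i) =
        channels d a' z' u' i := by
  intro i hi
  rcases Nat.eq_zero_or_pos i with rfl | hpos
  · simpa using h₀
  rcases Nat.lt_or_ge i (d + 1) with hd | hd
  · obtain ⟨ν, rfl⟩ : ∃ ν, i = ν + 1 := ⟨i - 1, by omega⟩
    simpa [channels_succ (by omega : ν < d)] using hZ ν (by omega)
  · obtain ⟨w, rfl⟩ : ∃ w, i = w + d + 1 := ⟨i - (d + 1), by omega⟩
    simpa using hU w (by omega)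

end Channels

structure TwoLayerBlock (W : ℕ) where
  nodes : ℕ → ℝ
  skip : ℕ → ℕ → ℝ
  inner : ℕ → ℕ → ℝ
  outer : ℕ → ℕ → ℝ

namespace TwoLayerBlock

variable {W : ℕ} (T : TwoLayerBlock W)

noncomputable def eval (t : ℝ) (ν : ℕ) : ℝ :=
  ramps W T.nodes t (T.skip ν) + ∑ w ∈ range W, T.outer w ν * relu (ramps W T.nodes t (T.inner w))

noncomputable def norm (ν : ℕ) : ℝ :=
  ∑ p ∈ range W, |T.skip ν p| + ∑ w ∈ range W, |T.outer w ν| * ∑ p ∈ range W, |T.inner w p|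

variable {T}

theorem norm_nonneg (ν : ℕ) : 0 ≤ T.norm ν :=
  add_nonneg (sum_nonneg fun _ _ => abs_nonneg _)
    (sum_nonneg fun _ _ => mul_nonneg (abs_nonneg _) (sum_nonneg fun _ _ => abs_nonneg _))

variable {a : ℝ} (hT : ∀ p < W, a ≤ T.nodes p) (t : ℝ) (ν : ℕ)
include hT

theorem abs_ramps_skip_le : |ramps W T.nodes t (T.skip ν)| ≤ T.norm ν * relu (t - a) := by
  refine (abs_ramps_le hT t _).trans (mul_le_mul_of_nonneg_right ?_ (relu_nonneg _))
  exact le_add_of_nonneg_right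
    (sum_nonneg fun _ _ => mul_nonneg (abs_nonneg _) (sum_nonneg fun _ _ => abs_nonneg _))

theorem abs_eval_le : |T.eval t ν| ≤ T.norm ν * relu (t - a) := by
  have hlanes : |∑ w ∈ range W, T.outer w ν * relu (ramps W T.nodes t (T.inner w))| ≤
      (∑ w ∈ range W, |T.outer w ν| * ∑ p ∈ range W, |T.inner w p|) * relu (t - a) := by
    rw [sum_mul]
    refine (abs_sum_le_sum_abs _ _).trans (sum_le_sum fun w _ => ?_)
    rw [abs_mul, mul_assoc]
    exact mul_le_mul_of_nonneg_left ((abs_relu_le _).trans (abs_ramps_le hT t _)) (abs_nonneg _)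
  calc |T.eval t ν|
      ≤ |ramps W T.nodes t (T.skip ν)| +
          |∑ w ∈ range W, T.outer w ν * relu (ramps W T.nodes t (T.inner w))| := abs_add_le _ _
    _ ≤ (∑ p ∈ range W, |T.skip ν p|) * relu (t - a) +
          (∑ w ∈ range W, |T.outer w ν| * ∑ p ∈ range W, |T.inner w p|) * relu (t - a) :=
        add_le_add (abs_ramps_le hT t _) hlanes
    _ = T.norm ν * relu (t - a) := by rw [norm, add_mul]

end TwoLayerBlock

namespace BlockNetwork

/-! Channel `0` carries `relu (t - a)`; channel `ν + 1` carries the partial sum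
`∑_{l' < l} (T l').eval t ν`, lifted by `shift ν * relu (t - a)` so that it is nonnegative and
passes through `relu` unchanged; the last `W` channels carry the ramps, resp. the inner neurons,
of the current block. -/

variable {W : ℕ} (d L : ℕ) (a : ℝ) (T : ℕ → TwoLayerBlock W)

noncomputable def blockSum (l : ℕ) (t : ℝ) (ν : ℕ) : ℝ := ∑ l' ∈ range l, (T l').eval t ν

noncomputable def shift (ν : ℕ) : ℝ := ∑ l ∈ range L, (T l).norm ν

noncomputable def oddLayer (l : ℕ) (t : ℝ) : ℕ → ℝ :=
  channels d (relu (t - a)) (fun ν => shift L T ν * relu (t - a) + blockSum T l t ν)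
    (fun p => relu (t - (T l).nodes p))

noncomputable def evenLayer (l : ℕ) (t : ℝ) : ℕ → ℝ :=
  channels d (relu (t - a))
    (fun ν => shift L T ν * relu (t - a) + blockSum T l t ν + ramps W (T l).nodes t ((T l).skip ν))
    (fun w => relu (ramps W (T l).nodes t ((T l).inner w)))

noncomputable def values (t : ℝ) : ℕ → ℕ → ℝ
  | 0 => fun _ => t
  | ℓ + 1 => if ℓ % 2 = 0 then oddLayer d L a T (ℓ / 2) t else evenLayer d L a T (ℓ / 2) t

noncomputable def inputRows : ℕ → ℕ → ℝ :=
  channels d (fun _ => 1) (fun ν _ => shift L T ν) (fun _ _ => 1)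

noncomputable def inputBias : ℕ → ℝ :=
  channels d (-a) (fun ν => -(shift L T ν * a)) (fun p => -(T 0).nodes p)

noncomputable def oddRows (l : ℕ) : ℕ → ℕ → ℝ :=
  channels d (channels d 1 0 0) (fun ν => channels d 0 (Pi.single ν 1) ((T l).skip ν))
    (fun w => channels d 0 0 ((T l).inner w))

noncomputable def evenRows (l : ℕ) : ℕ → ℕ → ℝ :=
  channels d (channels d 1 0 0) (fun ν => channels d 0 (Pi.single ν 1) (fun w => (T l).outer w ν))
    (fun _ => channels d 1 0 0)

noncomputable def evenBias (l : ℕ) : ℕ → ℝ :=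
  channels d 0 0 (fun p => a - (T (l + 1)).nodes p)

noncomputable def outputRows : ℕ → ℕ → ℝ :=
  fun ν => channels d (-shift L T ν) (Pi.single ν 1) (fun w => (T (L - 1)).outer w ν)

noncomputable def weights : ℕ → ℕ → ℕ → ℝ
  | 0 => inputRows d L T
  | ℓ + 1 =>
    if ℓ + 1 = 2 * L then outputRows d L T
    else if ℓ % 2 = 0 then oddRows d T (ℓ / 2) else evenRows d T (ℓ / 2)

noncomputable def biases (c : ℕ → ℝ) : ℕ → ℕ → ℝ
  | 0 => inputBias d L a T
  | ℓ + 1 =>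
    if ℓ + 1 = 2 * L then c
    else if ℓ % 2 = 0 then channels d 0 0 0 else evenBias d a T (ℓ / 2)

def widths (ℓ : ℕ) : ℕ := if ℓ = 0 then 1 else if ℓ = 2 * L + 1 then d else W + d + 1

noncomputable def net (c : ℕ → ℝ) : MLP 1 d :=
  MLP.ofCoeffs (2 * L) (widths (W := W) d L) rfl (by simp [widths]) (weights d L T)
    (biases d L a T c)

variable {d L a T}

theorem shift_nonneg (ν : ℕ) : 0 ≤ shift L T ν :=
  sum_nonneg fun _ _ => TwoLayerBlock.norm_nonneg ν

section Bounds

variable (hT : ∀ l < L, ∀ p < W, a ≤ (T l).nodes p) (t : ℝ) (ν : ℕ)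
include hT

theorem abs_blockSum_le {l : ℕ} (hl : l ≤ L) :
    |blockSum T l t ν| ≤ (∑ l' ∈ range l, (T l').norm ν) * relu (t - a) := by
  rw [blockSum, sum_mul]
  exact (abs_sum_le_sum_abs _ _).trans (sum_le_sum fun l' hl' =>
    TwoLayerBlock.abs_eval_le (hT l' (by simp at hl'; omega)) t ν)

theorem oddLayer_coord_nonneg {l : ℕ} (hl : l ≤ L) :
    0 ≤ shift L T ν * relu (t - a) + blockSum T l t ν := by
  have hsum : ∑ l' ∈ range l, (T l').norm ν ≤ shift L T ν :=
    sum_le_sum_of_subset_of_nonneg (range_subset_range.mpr hl)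
      fun _ _ _ => TwoLayerBlock.norm_nonneg ν
  have := (abs_le.mp (abs_blockSum_le hT t ν hl)).1
  nlinarith [relu_nonneg (t - a)]

theorem evenLayer_coord_nonneg {l : ℕ} (hl : l < L) :
    0 ≤ shift L T ν * relu (t - a) + blockSum T l t ν + ramps W (T l).nodes t ((T l).skip ν) := by
  have hsum : ∑ l' ∈ range (l + 1), (T l').norm ν ≤ shift L T ν :=
    sum_le_sum_of_subset_of_nonneg (range_subset_range.mpr hl)
      fun _ _ _ => TwoLayerBlock.norm_nonneg ν
  rw [sum_range_succ] at hsum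
  have h1 := (abs_le.mp (abs_blockSum_le hT t ν hl.le)).1
  have h2 := (abs_le.mp (TwoLayerBlock.abs_ramps_skip_le (hT l hl) t ν)).1
  nlinarith [relu_nonneg (t - a)]

end Bounds

theorem input_step (t : ℝ) : ∀ i < W + d + 1,
    relu (∑ n ∈ range 1, inputRows d L T i n * t + inputBias d L a T i) = oddLayer d L a T 0 t i :=
  relu_channels_step (by simp [sub_eq_add_neg])
    (fun ν _ => by
      simp [blockSum, ← mul_neg, ← mul_add, ← sub_eq_add_neg, relu_mul_of_nonneg (shift_nonneg ν)])
    (fun p _ => by simp [sub_eq_add_neg])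

variable (hT : ∀ l < L, ∀ p < W, a ≤ (T l).nodes p) (t : ℝ)
include hT

theorem odd_step {l : ℕ} (hl : l < L) : ∀ i < W + d + 1,
    relu (∑ n ∈ range (W + d + 1), oddRows d T l i n * oddLayer d L a T l t n +
      channels d 0 0 0 i) = evenLayer d L a T l t i := by
  refine relu_channels_step ?_ (fun ν hν => ?_) (fun w _ => ?_) <;>
    simp only [oddLayer, sum_channels_mul_channels, ← ramps_apply]
  · simp [relu_of_nonneg (relu_nonneg _)]
  · rw [sum_single_mul hν]
    simpa using relu_of_nonneg (evenLayer_coord_nonneg hT t ν hl)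
  · simp

theorem even_step {l : ℕ} (hl : l + 1 < L) : ∀ i < W + d + 1,
    relu (∑ n ∈ range (W + d + 1), evenRows d T l i n * evenLayer d L a T l t n +
      evenBias d a T l i) = oddLayer d L a T (l + 1) t i := by
  refine relu_channels_step ?_ (fun ν hν => ?_) (fun p hp => ?_) <;>
    simp only [evenLayer, sum_channels_mul_channels]
  · simp [relu_of_nonneg (relu_nonneg _)]
  · have hblock : blockSum T l t ν + ramps W (T l).nodes t ((T l).skip ν) +
        ∑ w ∈ range W, (T l).outer w ν * relu (ramps W (T l).nodes t ((T l).inner w)) =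
        blockSum T (l + 1) t ν := by
      rw [blockSum, blockSum, sum_range_succ, TwoLayerBlock.eval, add_assoc]
    rw [sum_single_mul hν]
    simpa [add_assoc, hblock] using relu_of_nonneg (oddLayer_coord_nonneg hT t ν hl.le)
  · simpa using relu_relu_sub_add_sub (hT (l + 1) hl p hp) t

theorem relu_weights_mul_values {ℓ : ℕ} (hℓ : ℓ < 2 * L) (c : ℕ → ℝ) :
    ∀ i < widths (W := W) d L (ℓ + 1),
      relu (∑ j ∈ range (widths (W := W) d L ℓ), weights d L T ℓ i j * values d L a T t ℓ j +
        biases d L a T c ℓ i) = values d L a T t (ℓ + 1) i := by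
  intro i hi
  rw [widths, if_neg (by omega), if_neg (by omega)] at hi
  obtain ⟨l, rfl | rfl⟩ := Nat.even_or_odd' ℓ
  · rcases l with _ | l
    · exact input_step t i hi
    · rw [show 2 * (l + 1) = 2 * l + 1 + 1 by ring] at hℓ ⊢
      have hodd : ¬ (2 * l + 1) % 2 = 0 := by omega
      rw [weights, biases, values, values, widths, if_neg (by omega), if_neg (by omega),
        if_neg (by omega), if_neg hodd, if_neg hodd, if_neg hodd, if_neg (by omega),
        if_pos (by omega), show (2 * l + 1) / 2 = l by omega,
        show (2 * l + 1 + 1) / 2 = l + 1 by omega]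
      exact even_step hT t (by omega) i hi
  · have heven : (2 * l) % 2 = 0 := by omega
    rw [weights, biases, values, values, widths, if_neg (by omega), if_neg (by omega),
      if_pos heven, if_pos heven, if_pos heven, if_neg (by omega), if_neg (by omega),
      if_neg (by omega), show 2 * l / 2 = l by omega, show (2 * l + 1) / 2 = l by omega]
    exact odd_step hT t (by omega) i hi

end BlockNetwork

open BlockNetwork in
theorem mem_NNFromReal_of_twoLayerBlocks {W d L : ℕ} (hL : 1 ≤ L) {a : ℝ}
    {T : ℕ → TwoLayerBlock W} (hT : ∀ l < L, ∀ p < W, a ≤ (T l).nodes p) (c : ℕ → ℝ) :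
    (fun t (ν : Fin d) => c ν + ∑ l ∈ range L, (T l).eval t ν) ∈
      NNFromReal d (W + d + 1) (2 * L) := by
  refine ⟨(net d L a T c).eval, ⟨net d L a T c, rfl, fun ℓ h₁ h₂ => ?_, rfl⟩, ?_⟩
  · change widths d L ℓ ≤ W + d + 1
    rw [widths, if_neg (by omega), if_neg (by omega)]
  funext t ν
  obtain ⟨L, rfl⟩ : ∃ L', L = L' + 1 := ⟨L - 1, by omega⟩
  have hlayers : ∀ ℓ ≤ 2 * (L + 1), ∀ i,
      (net d (L + 1) a T c).layer (fun _ => t) ℓ i = values d (L + 1) a T t ℓ i :=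
    MLP.layer_ofCoeffs (fun _ => rfl) fun ℓ hℓ => relu_weights_mul_values hT t hℓ c
  refine Eq.trans ?_ (MLP.eval_ofCoeffs (hlayers _ le_rfl) ν).symm
  change _ = ∑ n ∈ range (widths (W := W) d (L + 1) (2 * (L + 1))), _ + _
  have hlast : 2 * L + 1 + 1 = 2 * (L + 1) := by ring
  rw [← hlast, weights, biases, values, widths, if_pos hlast, if_pos hlast,
    if_neg (by omega : ¬ (2 * L + 1) % 2 = 0), if_neg (by omega), if_neg (by omega),
    show (2 * L + 1) / 2 = L by omega]
  simp only [outputRows, evenLayer, Nat.add_sub_cancel, sum_channels_mul_channels,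
    sum_single_mul ν.isLt]
  rw [blockSum, sum_range_succ, TwoLayerBlock.eval]
  ring

section NShape

/-! An `N`-shaped combination of four consecutive ramps `β g < ⋯ < β (g + 3)`: it falls on
`[β g, β (g + 1)]`, rises through zero at a prescribed `y ∈ (β (g + 1), β (g + 2))` with slope
`1`, falls back to zero on `[β (g + 2), β (g + 3)]` and vanishes outside `[β g, β (g + 3)]`.
Its `relu` has a new breakpoint at `y`. -/

variable (β : ℕ → ℝ) (g : ℕ) (y : ℝ)

noncomputable def nshapeSlopeLeft : ℝ := (β (g + 1) - y) / (β (g + 1) - β g)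

noncomputable def nshapeSlopeRight : ℝ := (y - β (g + 2)) / (β (g + 3) - β (g + 2))

noncomputable def nshape : ℕ → ℝ :=
  nshapeSlopeLeft β g y • Pi.single g 1 + (1 - nshapeSlopeLeft β g y) • Pi.single (g + 1) 1 +
    (nshapeSlopeRight β g y - 1) • Pi.single (g + 2) 1 +
    (-nshapeSlopeRight β g y) • Pi.single (g + 3) 1

noncomputable def nshapeSpill : ℕ → ℝ :=
  (nshapeSlopeRight β g y - 1) • Pi.single (g + 2) 1 +
    (-nshapeSlopeRight β g y) • Pi.single (g + 3) 1

variable {β g y}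

theorem nshapeSlopeLeft_mul (h₀ : β g < β (g + 1)) :
    nshapeSlopeLeft β g y * (β (g + 1) - β g) = β (g + 1) - y :=
  div_mul_cancel₀ _ (sub_ne_zero.mpr h₀.ne')

theorem nshapeSlopeRight_mul (h₃ : β (g + 2) < β (g + 3)) :
    nshapeSlopeRight β g y * (β (g + 3) - β (g + 2)) = y - β (g + 2) :=
  div_mul_cancel₀ _ (sub_ne_zero.mpr h₃.ne')

variable {W : ℕ} (hW : g + 3 < W) (t : ℝ)
include hW

theorem ramps_nshape : ramps W β t (nshape β g y) =
    nshapeSlopeLeft β g y * relu (t - β g) + (1 - nshapeSlopeLeft β g y) * relu (t - β (g + 1)) +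
      (nshapeSlopeRight β g y - 1) * relu (t - β (g + 2)) +
      -nshapeSlopeRight β g y * relu (t - β (g + 3)) := by
  simp only [nshape, map_add, map_smul, smul_eq_mul, ramps_single (by omega : g < W),
    ramps_single (by omega : g + 1 < W), ramps_single (by omega : g + 2 < W), ramps_single hW]

theorem ramps_nshapeSpill : ramps W β t (nshapeSpill β g y) =
    (nshapeSlopeRight β g y - 1) * relu (t - β (g + 2)) +
      -nshapeSlopeRight β g y * relu (t - β (g + 3)) := by
  simp only [nshapeSpill, map_add, map_smul, smul_eq_mul, ramps_single (by omega : g + 2 < W),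
    ramps_single hW]

variable (h₀ : β g < β (g + 1)) (h₁ : β (g + 1) < y) (h₂ : y < β (g + 2))
  (h₃ : β (g + 2) < β (g + 3))
include h₀ h₁ h₂ h₃

theorem ramps_nshape_eq_zero (ht : t ≤ β g ∨ β (g + 3) ≤ t) : ramps W β t (nshape β g y) = 0 := by
  have hm₁ := nshapeSlopeLeft_mul (y := y) h₀
  have hm₃ := nshapeSlopeRight_mul (y := y) h₃
  rw [ramps_nshape hW]
  rcases ht with ht | ht
  · simp only [relu_of_nonpos (by linarith : t - β g ≤ 0),
      relu_of_nonpos (by linarith : t - β (g + 1) ≤ 0),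
      relu_of_nonpos (by linarith : t - β (g + 2) ≤ 0),
      relu_of_nonpos (by linarith : t - β (g + 3) ≤ 0)]
    ring
  · simp only [relu_of_nonneg (by linarith : 0 ≤ t - β g),
      relu_of_nonneg (by linarith : 0 ≤ t - β (g + 1)),
      relu_of_nonneg (by linarith : 0 ≤ t - β (g + 2)),
      relu_of_nonneg (by linarith : 0 ≤ t - β (g + 3))]
    linear_combination hm₁ + hm₃

theorem relu_ramps_nshape :
    relu (ramps W β t (nshape β g y)) = relu (t - y) + ramps W β t (nshapeSpill β g y) := by
  have hm₁ := nshapeSlopeLeft_mul (y := y) h₀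
  have hm₃ := nshapeSlopeRight_mul (y := y) h₃
  rw [ramps_nshape hW, ramps_nshapeSpill hW]
  set m₁ := nshapeSlopeLeft β g y
  set m₃ := nshapeSlopeRight β g y
  have hm₁' : m₁ < 0 := by nlinarith
  have hm₃' : m₃ < 0 := by nlinarith
  rcases le_total t (β (g + 1)) with ht₁ | ht₁
  · rw [relu_of_nonpos (by linarith : t - β (g + 1) ≤ 0), relu_of_nonpos (by linarith : t - y ≤ 0),
      relu_of_nonpos (by linarith : t - β (g + 2) ≤ 0),
      relu_of_nonpos (by linarith : t - β (g + 3) ≤ 0),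
      relu_of_nonpos (by nlinarith [relu_nonneg (t - β g)])]
    ring
  rw [relu_of_nonneg (by linarith : 0 ≤ t - β g), relu_of_nonneg (by linarith : 0 ≤ t - β (g + 1))]
  rcases le_total t y with hty | hty
  · rw [relu_of_nonpos (by linarith : t - y ≤ 0), relu_of_nonpos (by linarith : t - β (g + 2) ≤ 0),
      relu_of_nonpos (by linarith : t - β (g + 3) ≤ 0), relu_of_nonpos (by nlinarith)]
    ring
  rw [relu_of_nonneg (by linarith : 0 ≤ t - y)]
  rcases le_total t (β (g + 2)) with ht₂ | ht₂
  · rw [relu_of_nonpos (by linarith : t - β (g + 2) ≤ 0),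
      relu_of_nonpos (by linarith : t - β (g + 3) ≤ 0), relu_of_nonneg (by nlinarith)]
    linear_combination hm₁
  rw [relu_of_nonneg (by linarith : 0 ≤ t - β (g + 2))]
  rcases le_total t (β (g + 3)) with ht₃ | ht₃
  · rw [relu_of_nonpos (by linarith : t - β (g + 3) ≤ 0), relu_of_nonneg (by nlinarith)]
    linear_combination hm₁
  · rw [relu_of_nonneg (by linarith : 0 ≤ t - β (g + 3)), relu_of_nonneg (by nlinarith)]
    linear_combination hm₁

end NShape

section Lanes

/-! The inner neuron of the lane `(j, ν, r, σ)` sums the `N`-shapes at `y = γ g j` of all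
`g ≡ r [MOD 3]`, weighted by the positive (`σ = true`) or negative part of `Γ ν g j`. These
`N`-shapes have disjoint supports, so the lane's `relu` acts on each of them separately. -/

abbrev Lane (k d : ℕ) : Type := Fin k × Fin d × ZMod 3 × Bool

def hosts (m : ℕ) (r : ZMod 3) : Finset ℕ := {g ∈ range m | (g : ZMod 3) = r}

noncomputable def laneAmp (σ : Bool) (x : ℝ) : ℝ := if σ then x⁺ else x⁻

def laneSign (σ : Bool) : ℝ := if σ then 1 else -1

theorem laneAmp_nonneg (σ : Bool) (x : ℝ) : 0 ≤ laneAmp σ x := by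
  cases σ
  · exact negPart_nonneg x
  · exact posPart_nonneg x

theorem sum_laneSign_mul_laneAmp (x : ℝ) : ∑ σ, laneSign σ * laneAmp σ x = x := by
  simp [laneSign, laneAmp, posPart_sub_negPart, ← sub_eq_add_neg]

variable {k d : ℕ} (m : ℕ) (β : ℕ → ℝ) (γ : ℕ → ℕ → ℝ) (Γ : ℕ → ℕ → ℕ → ℝ)

noncomputable def laneInner (i : Lane k d) : ℕ → ℝ :=
  ∑ g ∈ hosts m i.2.2.1, laneAmp i.2.2.2 (Γ i.2.1 g i.1) • nshape β g (γ g i.1)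

def laneOuter (i : Lane k d) (ν : ℕ) : ℝ := if (i.2.1 : ℕ) = ν then laneSign i.2.2.2 else 0

variable {m β γ Γ} (hβ : StrictMonoOn β (Set.Iic (m + 2)))
  (hγ : ∀ g < m, ∀ j < k, β (g + 1) < γ g j ∧ γ g j < β (g + 2))
include hβ hγ

theorem host_order {g j : ℕ} (hg : g < m) (hj : j < k) :
    β g < β (g + 1) ∧ β (g + 1) < γ g j ∧ γ g j < β (g + 2) ∧ β (g + 2) < β (g + 3) := by
  have hlt : ∀ p ≤ m + 1, β p < β (p + 1) := fun p hp =>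
    hβ (Set.mem_Iic.mpr (by omega)) (Set.mem_Iic.mpr (by omega)) (Nat.lt_succ_self p)
  exact ⟨hlt g (by omega), (hγ g hg j hj).1, (hγ g hg j hj).2, hlt (g + 2) (by omega)⟩

theorem ramps_nshape_eq_zero_or {g g' j : ℕ} (hgg' : g + 3 ≤ g') (hg' : g' < m) (hj : j < k)
    (t : ℝ) : ramps (m + 3) β t (nshape β g (γ g j)) = 0 ∨
      ramps (m + 3) β t (nshape β g' (γ g' j)) = 0 := by
  obtain ⟨h₀, h₁, h₂, h₃⟩ := host_order hβ hγ (g := g) (by omega) hj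
  obtain ⟨h₀', h₁', h₂', h₃'⟩ := host_order hβ hγ hg' hj
  rcases le_total t (β (g + 3)) with ht | ht
  · have hle : β (g + 3) ≤ β g' :=
      hβ.monotoneOn (Set.mem_Iic.mpr (by omega)) (Set.mem_Iic.mpr (by omega)) hgg'
    exact Or.inr (ramps_nshape_eq_zero (by omega) t h₀' h₁' h₂' h₃' (Or.inl (ht.trans hle)))
  · exact Or.inl (ramps_nshape_eq_zero (by omega) t h₀ h₁ h₂ h₃ (Or.inr ht))

theorem relu_ramps_laneInner (i : Lane k d) (t : ℝ) :
    relu (ramps (m + 3) β t (laneInner m β γ Γ i)) =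
      ∑ g ∈ hosts m i.2.2.1, laneAmp i.2.2.2 (Γ i.2.1 g i.1) *
        (relu (t - γ g i.1) + ramps (m + 3) β t (nshapeSpill β g (γ g i.1))) := by
  obtain ⟨j, ν, r, σ⟩ := i
  have hhost : ∀ g ∈ hosts m r, g < m := fun g hg => by simp [hosts] at hg; exact hg.1
  rw [laneInner, map_sum]
  simp only [map_smul, smul_eq_mul]
  rw [relu_sum_of_pairwise]
  · refine sum_congr rfl fun g hg => ?_
    obtain ⟨h₀, h₁, h₂, h₃⟩ := host_order hβ hγ (hhost g hg) j.isLt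
    rw [relu_mul_of_nonneg (laneAmp_nonneg _ _),
      relu_ramps_nshape (by have := hhost g hg; omega) t h₀ h₁ h₂ h₃]
  · intro g hg g' hg' hne
    have hsep : g + 3 ≤ g' ∨ g' + 3 ≤ g := by
      have hmod := (ZMod.natCast_eq_natCast_iff' g g' 3).mp
        ((mem_filter.mp hg).2.trans (mem_filter.mp hg').2.symm)
      omega
    have hmul : ∀ {c x : ℝ}, x = 0 → c * x = 0 := fun h => by rw [h, mul_zero]
    rcases hsep with hsep | hsep
    · exact (ramps_nshape_eq_zero_or hβ hγ hsep (hhost g' hg') j.isLt t).imp hmul hmul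
    · exact ((ramps_nshape_eq_zero_or hβ hγ hsep (hhost g hg) j.isLt t).imp hmul hmul).symm

theorem sum_laneOuter_mul_relu {ν : ℕ} (hν : ν < d) (t : ℝ) :
    ∑ i : Lane k d, laneOuter i ν * relu (ramps (m + 3) β t (laneInner m β γ Γ i)) =
      ∑ g ∈ range m, ∑ j ∈ range k,
        Γ ν g j * (relu (t - γ g j) + ramps (m + 3) β t (nshapeSpill β g (γ g j))) := by
  simp only [relu_ramps_laneInner hβ hγ, laneOuter, Fintype.sum_prod_type, ite_mul, zero_mul]
  set H : ℕ → ℕ → ℝ := fun g j => relu (t - γ g j) + ramps (m + 3) β t (nshapeSpill β g (γ g j))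
  have hsigns : ∀ (j : ℕ) (r : ZMod 3),
      ∑ σ, laneSign σ * ∑ g ∈ hosts m r, laneAmp σ (Γ ν g j) * H g j =
        ∑ g ∈ hosts m r, Γ ν g j * H g j := fun j r => by
    simp_rw [mul_sum, ← mul_assoc]
    rw [sum_comm]
    simp_rw [← sum_mul, sum_laneSign_mul_laneAmp]
  calc _ = ∑ j : Fin k, ∑ r : ZMod 3, ∑ σ,
          laneSign σ * ∑ g ∈ hosts m r, laneAmp σ (Γ ν g j) * H g j := by
        refine sum_congr rfl fun j _ => ?_
        rw [Fintype.sum_eq_single ⟨ν, hν⟩ fun ν' hν' =>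
          sum_eq_zero fun r _ => sum_eq_zero fun σ _ => if_neg fun h => hν' (Fin.ext h)]
        simp only [if_true]
        rfl
    _ = ∑ j : Fin k, ∑ g ∈ range m, Γ ν g j * H g j := by
        simp only [hsigns]
        exact sum_congr rfl fun j _ => sum_fiberwise (range m) (fun g => (g : ZMod 3)) _
    _ = _ := by
        rw [Fin.sum_univ_eq_sum_range (fun j => ∑ g ∈ range m, Γ ν g j * H g j) k, sum_comm]

end Lanes

theorem sum_range_eq_sum_equivFin {ι M : Type*} [Fintype ι] [AddCommMonoid M] {W : ℕ}
    (hW : Fintype.card ι ≤ W) {H : ℕ → M} (G : ι → M)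
    (hH : ∀ w (hw : w < Fintype.card ι), H w = G ((Fintype.equivFin ι).symm ⟨w, hw⟩))
    (hH₀ : ∀ w, Fintype.card ι ≤ w → H w = 0) :
    ∑ w ∈ range W, H w = ∑ i, G i := by
  rw [← sum_subset (range_subset_range.mpr hW) fun w _ hw => hH₀ w (by simpa using hw),
    ← Fin.sum_univ_eq_sum_range, ← (Fintype.equivFin ι).symm.sum_comp]
  exact sum_congr rfl fun w _ => hH w w.isLt

theorem exists_twoLayerBlock {m k d : ℕ} {β : ℕ → ℝ} {γ : ℕ → ℕ → ℝ}
    (hlanes : 6 * d * k ≤ m + 3) (hβ : StrictMonoOn β (Set.Iic (m + 2)))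
    (hγ : ∀ g < m, ∀ j < k, β (g + 1) < γ g j ∧ γ g j < β (g + 2))
    (B₀ : ℕ → ℕ → ℝ) (Γ : ℕ → ℕ → ℕ → ℝ) :
    ∃ T : TwoLayerBlock (m + 3), T.nodes = β ∧ ∀ t, ∀ ν < d,
      ramps (m + 3) β t (B₀ ν) + ∑ g ∈ range m, ∑ j ∈ range k, Γ ν g j * relu (t - γ g j) =
        T.eval t ν := by
  have hcard : Fintype.card (Lane k d) ≤ m + 3 := by
    simp only [Fintype.card_prod, Fintype.card_fin, ZMod.card, Fintype.card_bool]
    linarith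
  refine ⟨⟨β, fun ν => B₀ ν - ∑ g ∈ range m, ∑ j ∈ range k, Γ ν g j • nshapeSpill β g (γ g j),
    fun w => if hw : w < Fintype.card (Lane k d) then
      laneInner m β γ Γ ((Fintype.equivFin _).symm ⟨w, hw⟩) else 0,
    fun w ν => if hw : w < Fintype.card (Lane k d) then
      laneOuter ((Fintype.equivFin _).symm ⟨w, hw⟩) ν else 0⟩,
    rfl, fun t ν hν => ?_⟩
  rw [TwoLayerBlock.eval, sum_range_eq_sum_equivFin hcard
      (fun i => laneOuter i ν * relu (ramps (m + 3) β t (laneInner m β γ Γ i)))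
      (fun w hw => by simp only [dif_pos hw])
      (fun w hw => by simp only [dif_neg (not_lt.mpr hw), zero_mul]),
    sum_laneOuter_mul_relu hβ hγ hν t]
  simp only [map_sub, map_sum, map_smul, smul_eq_mul, mul_add, sum_add_distrib]
  ring

section Kinks

theorem sum_relu_smul_sub_sum {E : Type*} [AddCommGroup E] [Module ℝ E] {x : ℕ → ℝ}
    (hx : Monotone x) (κ : ℕ → E) {n i : ℕ} (hi : i < n) {s t : ℝ} (hs : x i ≤ s) (hst : s ≤ t)
    (ht : i + 1 < n → t ≤ x (i + 1)) :
    ∑ q ∈ range n, relu (t - x q) • κ q - ∑ q ∈ range n, relu (s - x q) • κ q =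
      (t - s) • ∑ q ∈ range (i + 1), κ q := by
  rw [← sum_sub_distrib, ← sum_range_add_sum_Ico _ hi, smul_sum]
  have hright : ∑ q ∈ Ico (i + 1) n, (relu (t - x q) • κ q - relu (s - x q) • κ q) = 0 := by
    refine sum_eq_zero fun q hq => ?_
    obtain ⟨hq₁, hq₂⟩ := mem_Ico.mp hq
    have := (ht (by omega)).trans (hx hq₁)
    rw [relu_of_nonpos (by linarith : t - x q ≤ 0), relu_of_nonpos (by linarith : s - x q ≤ 0),
      sub_self]
  rw [hright, add_zero]
  refine sum_congr rfl fun q hq => ?_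
  have := hx (Nat.le_of_lt_succ (mem_range.mp hq))
  rw [← sub_smul, relu_of_nonneg (by linarith : 0 ≤ t - x q),
    relu_of_nonneg (by linarith : 0 ≤ s - x q), sub_sub_sub_cancel_right]

theorem exists_kinks_of_mem_CPwLClass {d N : ℕ} {x : ℕ → ℝ} (hx : Monotone x)
    {f : ℝ → Fin d → ℝ} (hf : f ∈ CPwLClass d N x) :
    ∃ κ : ℕ → Fin d → ℝ, ∀ t, f t = f (x 0) + ∑ q ∈ range (N + 2), relu (t - x q) • κ q := by
  obtain ⟨-, hleft, hright, hpiece⟩ := hf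
  choose a b hab using hpiece
  set A : ℕ → Fin d → ℝ := fun i => if h : i ≤ N then a i h else 0
  have hslope : ∀ i ≤ N, ∀ s t, x i ≤ s → s ≤ t → t ≤ x (i + 1) → f t - f s = (t - s) • A i := by
    intro i hi s t hs hst ht
    rw [hab i hi t ⟨hs.trans hst, ht⟩, hab i hi s ⟨hs, hst.trans ht⟩]
    funext j
    simp only [A, dif_pos hi, Pi.sub_apply, Pi.smul_apply, smul_eq_mul]
    ring
  set κ : ℕ → Fin d → ℝ := fun q => A q - if q = 0 then 0 else A (q - 1)
  have hκ : ∀ i, ∑ q ∈ range (i + 1), κ q = A i := by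
    intro i
    induction i with
    | zero => simp [κ]
    | succ i ih => rw [sum_range_succ, ih]; simp [κ]
  set g : ℝ → Fin d → ℝ := fun t => f (x 0) + ∑ q ∈ range (N + 2), relu (t - x q) • κ q
  have hincr : ∀ i ≤ N + 1, ∀ s t, x i ≤ s → s ≤ t → (i ≤ N → t ≤ x (i + 1)) →
      g t = g s + (t - s) • A i := by
    intro i hi s t hs hst ht
    rw [← hκ i, ← sum_relu_smul_sub_sum hx κ (n := N + 2) (by omega) hs hst
      fun h => ht (by omega)]
    simp only [g]
    abel
  have hbelow : ∀ i ≤ N + 1, ∀ t ≤ x i, f t = g t := by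
    intro i
    induction i with
    | zero =>
      intro _ t ht
      rw [hleft t ht]
      refine (add_eq_left.mpr (sum_eq_zero fun q _ => ?_)).symm
      rw [relu_of_nonpos (by linarith [hx (Nat.zero_le q)]), zero_smul]
    | succ i ih =>
      intro hi t ht
      rcases le_total t (x i) with h | h
      · exact ih (by omega) t h
      rw [hincr i (by omega) (x i) t le_rfl h fun _ => ht, ← ih (by omega) _ le_rfl,
        ← hslope i (by omega) (x i) t le_rfl h ht, add_sub_cancel]
  refine ⟨κ, fun t => show f t = g t from ?_⟩
  rcases le_total t (x (N + 1)) with h | h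
  · exact hbelow (N + 1) le_rfl t h
  · rw [hright t h, hbelow (N + 1) le_rfl _ le_rfl,
      hincr (N + 1) le_rfl _ t le_rfl h fun h' => absurd h' (by omega)]
    simp [A]

end Kinks

section Layout

theorem sum_range_mul_eq_sum_sum {M : Type*} [AddCommMonoid M] (a b : ℕ) (f : ℕ → M) :
    ∑ q ∈ range (a * b), f q = ∑ i ∈ range a, ∑ r ∈ range b, f (i * b + r) := by
  induction a with
  | zero => simp
  | succ a ih => rw [Nat.succ_mul, sum_range_add, ih, sum_range_succ]

/-! A block of `m * (k + 1) + 3` consecutive breakpoints: the `m + 3` ramps sit at the offsets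
`boundaryIdx m k p`, and `k` breakpoints `interiorIdx k g j` lie between the ramps `g + 1`
and `g + 2`, for each `g < m`. -/

variable (m k : ℕ)

def blockLength : ℕ := m * (k + 1) + 3

def boundaryIdx : ℕ → ℕ
  | 0 => 0
  | p + 1 => if p ≤ m then p * (k + 1) + 1 else m * (k + 1) + 2

def interiorIdx (g j : ℕ) : ℕ := g * (k + 1) + j + 2

theorem sum_range_blockLength {M : Type*} [AddCommMonoid M] (F : ℕ → M) :
    ∑ e ∈ range (blockLength m k), F e =
      ∑ p ∈ range (m + 3), F (boundaryIdx m k p) +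
        ∑ g ∈ range m, ∑ j ∈ range k, F (interiorIdx k g j) := by
  have hgroups : ∀ g ∈ range m, ∑ r ∈ range (k + 1), F (1 + (g * (k + 1) + r)) =
      ∑ j ∈ range k, F (interiorIdx k g j) + F (boundaryIdx m k (g + 1)) := fun g hg => by
    rw [sum_range_succ', boundaryIdx, if_pos (by simp at hg; omega)]
    congr 1
    · exact sum_congr rfl fun j _ => congrArg F (by simp only [interiorIdx]; ring)
    · exact congrArg F (by ring)
  have hlhs : ∑ e ∈ range (blockLength m k), F e = F 0 +
      ∑ g ∈ range m, (∑ j ∈ range k, F (interiorIdx k g j) + F (boundaryIdx m k (g + 1))) +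
        (F (m * (k + 1) + 1) + F (m * (k + 1) + 2)) := by
    rw [blockLength, show m * (k + 1) + 3 = 1 + m * (k + 1) + 2 by ring, sum_range_add,
      sum_range_add, sum_range_mul_eq_sum_sum, sum_congr rfl hgroups]
    simp only [sum_range_succ, sum_range_zero, zero_add, add_zero, add_comm 1 (m * (k + 1))]
  have hrhs : ∑ p ∈ range (m + 3), F (boundaryIdx m k p) = F 0 +
      ∑ g ∈ range m, F (boundaryIdx m k (g + 1)) + F (m * (k + 1) + 1) + F (m * (k + 1) + 2) := by
    rw [sum_range_succ, sum_range_succ, sum_range_succ']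
    simp only [boundaryIdx, le_refl, if_true, show ¬ m + 1 ≤ m by omega, if_false]
    abel
  rw [hlhs, hrhs, sum_add_distrib]
  abel

theorem boundaryIdx_lt_succ {p : ℕ} (hp : p ≤ m + 1) :
    boundaryIdx m k p < boundaryIdx m k (p + 1) := by
  rcases p with _ | p
  · simp [boundaryIdx]
  · simp only [boundaryIdx]
    split_ifs <;> nlinarith

theorem boundaryIdx_lt_interiorIdx {g j : ℕ} (hg : g < m) :
    boundaryIdx m k (g + 1) < interiorIdx k g j := by
  simp only [boundaryIdx, interiorIdx, if_pos hg.le]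
  omega

theorem interiorIdx_lt_boundaryIdx {g j : ℕ} (hg : g < m) (hj : j < k) :
    interiorIdx k g j < boundaryIdx m k (g + 2) := by
  simp only [boundaryIdx, interiorIdx, if_pos (Nat.succ_le_of_lt hg)]
  nlinarith

theorem add_two_le_mul_blockLength {N L : ℕ} (hkm : 6 * k ≤ m + 3) (hL : 1 ≤ L)
    (hN : N ≤ (m + 3) * k * L) : N + 2 ≤ L * blockLength m k := by
  have := Nat.mul_le_mul_left L (by omega : 3 * k ≤ m)
  simp only [blockLength]
  nlinarith

end Layout

theorem sum_ramps_mem_NNFromReal {d m k L : ℕ} (hL : 1 ≤ L) (hlanes : 6 * d * k ≤ m + 3)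
    {X : ℕ → ℝ} (hX : StrictMono X) (c : Fin d → ℝ) (κ : ℕ → Fin d → ℝ) :
    (fun t => c + ∑ q ∈ range (L * blockLength m k), relu (t - X q) • κ q) ∈
      NNFromReal d (m + 3 + d + 1) (2 * L) := by
  set D := blockLength m k
  let κ' : ℕ → ℕ → ℝ := fun q ν => if h : ν < d then κ q ⟨ν, h⟩ else 0
  have hβ : ∀ l, StrictMonoOn (fun p => X (l * D + boundaryIdx m k p)) (Set.Iic (m + 2)) :=
    fun l => strictMonoOn_Iic_of_lt_succ fun p hp =>
      hX (Nat.add_lt_add_left (boundaryIdx_lt_succ m k (by omega)) _)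
  have hγ : ∀ l, ∀ g < m, ∀ j < k,
      X (l * D + boundaryIdx m k (g + 1)) < X (l * D + interiorIdx k g j) ∧
        X (l * D + interiorIdx k g j) < X (l * D + boundaryIdx m k (g + 2)) := fun l g hg j hj =>
    ⟨hX (Nat.add_lt_add_left (boundaryIdx_lt_interiorIdx m k hg) _),
      hX (Nat.add_lt_add_left (interiorIdx_lt_boundaryIdx m k hg hj) _)⟩
  choose T hTnodes hT using fun l => exists_twoLayerBlock hlanes (hβ l) (hγ l)
    (fun ν p => κ' (l * D + boundaryIdx m k p) ν) (fun ν g j => κ' (l * D + interiorIdx k g j) ν)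
  convert mem_NNFromReal_of_twoLayerBlocks hL (a := X 0) (T := T)
    (fun l _ p _ => by rw [hTnodes]; exact hX.monotone (Nat.zero_le _))
    (fun ν => if h : ν < d then c ⟨ν, h⟩ else 0) using 1
  funext t ν
  simp only [Pi.add_apply, Finset.sum_apply, Pi.smul_apply, smul_eq_mul, dif_pos ν.isLt]
  congr 1
  rw [sum_range_mul_eq_sum_sum]
  refine sum_congr rfl fun l _ => ?_
  rw [← hT l t ν ν.isLt, sum_range_blockLength, ramps_apply]
  simp [κ', mul_comm]

theorem exists_strictMono_extension {N : ℕ} {x : ℕ → ℝ} (hx : ∀ i ≤ N, x i < x (i + 1)) :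
    ∃ X : ℕ → ℝ, StrictMono X ∧ ∀ i ≤ N + 1, X i = x i := by
  refine ⟨fun q => x (min q (N + 1)) + (q - (N + 1) : ℕ), strictMono_nat_of_lt_succ fun q => ?_,
    fun i hi => by simp [min_eq_left hi, Nat.sub_eq_zero_of_le hi]⟩
  rcases le_or_gt q N with hq | hq
  · simpa [min_eq_left (by omega : q ≤ N + 1), min_eq_left (by omega : q + 1 ≤ N + 1),
      Nat.sub_eq_zero_of_le (by omega : q ≤ N + 1),
      Nat.sub_eq_zero_of_le (by omega : q + 1 ≤ N + 1)]
      using hx q hq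
  · simp only [min_eq_right (by omega : N + 1 ≤ q), min_eq_right (by omega : N + 1 ≤ q + 1),
      add_lt_add_iff_left, Nat.cast_lt]
    omega

theorem CPwLClass_congr {d N : ℕ} {x X : ℕ → ℝ} (h : ∀ i ≤ N + 1, X i = x i) :
    CPwLClass d N X = CPwLClass d N x := by
  ext f
  simp only [CPwLClass, Set.mem_ofPred_eq, h 0 (Nat.zero_le _), h (N + 1) le_rfl]
  refine and_congr_right' (and_congr_right' (and_congr_right' (forall₂_congr fun i hi => ?_)))
  rw [h i (by omega), h (i + 1) (by omega)]

/-- CPwL functions are realizable by ReLU networks.  If `W ≥ 6d`,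
`L ≥ 1` and `N ≤ W·⌊W/(6d)⌋·L`, then `S^d(x₀,…,x_{N+1}) ⊆ NN_{1,d}(W+d+1, 2L)`. -/
theorem statement4 (d N W L : ℕ) (hW : 6 * d ≤ W) (hL : 1 ≤ L)
    (hN : N ≤ W * (W / (6 * d)) * L)
    (x : ℕ → ℝ) (hx : ∀ i ≤ N, x i < x (i + 1)) :
    CPwLClass d N x ⊆ NNFromReal d (W + d + 1) (2 * L) := by
  intro f hf
  rcases Nat.eq_zero_or_pos d with rfl | hd
  · -- `Fin 0 → ℝ` is a singleton, so any network will do.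
    convert mem_NNFromReal_of_twoLayerBlocks (W := W) (d := 0) hL (a := 0)
      (T := fun _ => ⟨fun _ => 0, 0, 0, 0⟩) (fun _ _ _ _ => le_rfl) 0
  set k := W / (6 * d)
  have hlanes : 6 * d * k ≤ W := by rw [mul_comm]; exact Nat.div_mul_le_self W (6 * d)
  obtain ⟨m, rfl⟩ : ∃ m, W = m + 3 := ⟨W - 3, by omega⟩
  have hcap : N + 2 ≤ L * blockLength m k :=
    add_two_le_mul_blockLength m k (le_trans (by nlinarith) hlanes) hL hN
  obtain ⟨X, hX, hXx⟩ := exists_strictMono_extension hx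
  rw [← CPwLClass_congr hXx] at hf
  obtain ⟨κ, hκ⟩ := exists_kinks_of_mem_CPwLClass hX.monotone hf
  convert sum_ramps_mem_NNFromReal hL hlanes hX (f (X 0)) (fun q => if q < N + 2 then κ q else 0)
    using 1
  funext t
  rw [hκ t, ← sum_subset (range_subset_range.mpr hcap) fun q _ hq => by
    rw [if_neg (by simpa using hq), smul_zero]]
  exact congrArg _ (sum_congr rfl fun q hq => by rw [if_pos (mem_range.mp hq)])
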